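/- Let V be a finite-dimensional real inner product space with orthogonal decomposition V = m₁ ⊕ m₂, let φ : [0,1] → ℝ₊ be smooth, and let g_y be the Tan–Xu fundamental tensor of F(y) = |y|·φ(|y₂|/|y|). Suppose B : V × V → V is a bilinear map (thought of as (z,u) ↦ [z,u]) satisfying: (i) ⟨B(z,u), v⟩ = −⟨B(z,v), u⟩ for all z,u,v ∈ V (skew-adjointness of B(z,·)), and (ii) the m₂-component of B(z,u) is zero for all z,u ∈ V. Then for all y ∈ V with y ≠ 0, y₂ ≠ 0, and all z,u,v ∈ V: g_y(B(z,u), v) + g_y(u, B(z,v)) + 2·C_y(B(z,y), u, v) = 0, where C_y(w,u,v) = (1/2) d/dt[g_{y+tw}(u,v)]|_{t=0} is the Cartan tensor. -/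

import Mathlib

open scoped RealInnerProductSpace

/-- The Tan–Xu fundamental tensor of the `(α₁,α₂)`-norm `F(y) = ‖y‖·φ(‖y₂‖/‖y‖)`
on `V = m₂ᗮ ⊕ m₂`, where `y₂` denotes the orthogonal projection onto `m₂`. -/
noncomputable def tanXu {V : Type*} [NormedAddCommGroup V] [InnerProductSpace ℝ V]
    [FiniteDimensional ℝ V] (m₂ : Submodule ℝ V) (φ : ℝ → ℝ) (y u v : V) : ℝ :=
  let y2 : V := (m₂.orthogonalProjectionOnto y : V)
  let u2 : V := (m₂.orthogonalProjectionOnto u : V)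
  let v2 : V := (m₂.orthogonalProjectionOnto v : V)
  let b : ℝ := ‖y2‖ / ‖y‖
  ⟪u, v⟫ * (φ b) ^ 2
    + φ b * deriv φ b *
      (⟪y, v⟫ * ⟪y2, u2⟫ / (‖y‖ * ‖y2‖)
        + ⟪y2, v2⟫ * ⟪y, u⟫ / (‖y‖ * ‖y2‖)
        - ⟪y, u⟫ * ⟪y, v⟫ * ‖y2‖ / ‖y‖ ^ 3
        + ⟪u2, v2⟫ * ‖y‖ / ‖y2‖
        - ⟪u, v⟫ * ‖y2‖ / ‖y‖
        - ⟪u2, y2⟫ * ⟪v2, y2⟫ * ‖y‖ / ‖y2‖ ^ 3)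
    + ((deriv φ b) ^ 2 + φ b * deriv (deriv φ) b) *
        (⟪u2, y2⟫ / (‖y‖ * ‖y2‖) - ⟪u, y⟫ * ‖y2‖ / ‖y‖ ^ 3) *
        (⟪v2, y2⟫ * ‖y‖ / ‖y2‖ - ⟪v, y⟫ * ‖y2‖ / ‖y‖)

/-- The Cartan tensor `C_y(w,u,v) = (1/2)·d/dt [g_{y+tw}(u,v)]|_{t=0}` of the
`(α₁,α₂)`-norm `F(y) = ‖y‖·φ(‖y₂‖/‖y‖)`. -/
noncomputable def cartanXu {V : Type*} [NormedAddCommGroup V] [InnerProductSpace ℝ V]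
    [FiniteDimensional ℝ V] (m₂ : Submodule ℝ V) (φ : ℝ → ℝ) (y w u v : V) : ℝ :=
  deriv (fun t : ℝ => tanXu m₂ φ (y + t • w) u v) 0 / 2

open scoped ContDiff

set_option maxHeartbeats 4000000

lemma normLine_hasDerivAt {V : Type*} [NormedAddCommGroup V] [InnerProductSpace ℝ V]
    (y w : V) (hy : y ≠ 0) (hwy : ⟪y, w⟫ = 0) :
    HasDerivAt (fun t : ℝ => ‖y + t • w‖) 0 0 := by
  have hfun : (fun t : ℝ => ‖y + t • w‖) = fun t : ℝ => Real.sqrt (‖y‖ ^ 2 + t ^ 2 * ‖w‖ ^ 2) := by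
    funext t
    rw [← Real.sqrt_sq (norm_nonneg (y + t • w)), norm_add_sq_real]
    congr 1
    simp [real_inner_smul_right, hwy, norm_smul, mul_pow]
  rw [hfun]
  have h1 : HasDerivAt (fun t : ℝ => ‖y‖ ^ 2 + t ^ 2 * ‖w‖ ^ 2) 0 0 := by
    simpa using ((hasDerivAt_pow 2 (0 : ℝ)).mul_const (‖w‖ ^ 2)).const_add (‖y‖ ^ 2)
  have h2 := h1.sqrt (by simpa using pow_ne_zero 2 (norm_ne_zero_iff.mpr hy))
  simpa using h2

/-- Theorem 3.1 at the level of the Minkowski norm: if `B` (thought of as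
`(z,u) ↦ [z,u]`) is bilinear with `B(z,·)` skew-adjoint and all values of `B` have
vanishing `m₂`-component, then the Deng natural-reductivity equation
`g_y(B(z,u),v) + g_y(u,B(z,v)) + 2·C_y(B(z,y),u,v) = 0` holds. -/
theorem stmt_12 {V : Type*} [NormedAddCommGroup V] [InnerProductSpace ℝ V]
    [FiniteDimensional ℝ V] (m₂ : Submodule ℝ V) (φ : ℝ → ℝ) (hφ : ContDiff ℝ (⊤ : ℕ∞) φ)
    (B : V →ₗ[ℝ] V →ₗ[ℝ] V)
    (hskew : ∀ z u v : V, ⟪B z u, v⟫ = -⟪B z v, u⟫)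
    (hm2 : ∀ z u : V, m₂.orthogonalProjectionOnto (B z u) = 0) :
    ∀ y : V, y ≠ 0 → (m₂.orthogonalProjectionOnto y : V) ≠ 0 → ∀ z u v : V,
      tanXu m₂ φ y (B z u) v + tanXu m₂ φ y u (B z v)
        + 2 * cartanXu m₂ φ y (B z y) u v = 0 := by
  intro y hy hy2 z u v
  set w : V := B z y with hwdef
  have hs : ‖y‖ ≠ 0 := norm_ne_zero_iff.mpr hy
  have hr : ‖(m₂.orthogonalProjectionOnto y : V)‖ ≠ 0 := norm_ne_zero_iff.mpr hy2
  have hwy0 : ⟪w, y⟫ = (0 : ℝ) := by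
    have h := hskew z y y
    rw [← hwdef] at h
    linarith
  have hyw : ⟪y, w⟫ = (0 : ℝ) := by rw [real_inner_comm]; exact hwy0
  have hPw0 : m₂.orthogonalProjectionOnto w = 0 := by rw [hwdef]; exact hm2 z y
  have hn : HasDerivAt (fun t : ℝ => ‖y + t • w‖) 0 0 := normLine_hasDerivAt y w hy hyw
  have hb : HasDerivAt
      (fun t : ℝ => ‖(m₂.orthogonalProjectionOnto y : V)‖ / ‖y + t • w‖) 0 0 := by
    simpa [Pi.div_def] using (hasDerivAt_const (0 : ℝ) ‖(m₂.orthogonalProjectionOnto y : V)‖).div hn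
      (by simpa using hy)
  have h8 : ContDiff ℝ (∞ : WithTop ℕ∞) φ := hφ.of_le (by simp)
  obtain ⟨hd0, h8'⟩ := contDiff_infty_iff_deriv.mp h8
  obtain ⟨hd1, h8''⟩ := contDiff_infty_iff_deriv.mp h8'
  have hd2 : Differentiable ℝ (deriv (deriv φ)) := (contDiff_infty_iff_deriv.mp h8'').1
  have hp : HasDerivAt
      (fun t : ℝ => φ (‖(m₂.orthogonalProjectionOnto y : V)‖ / ‖y + t • w‖)) 0 0 := by
    simpa [Function.comp_def] using (hd0 _).hasDerivAt.comp 0 hb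
  have hq : HasDerivAt
      (fun t : ℝ => deriv φ (‖(m₂.orthogonalProjectionOnto y : V)‖ / ‖y + t • w‖)) 0 0 := by
    simpa [Function.comp_def] using (hd1 _).hasDerivAt.comp 0 hb
  have hq2 : HasDerivAt
      (fun t : ℝ => deriv (deriv φ) (‖(m₂.orthogonalProjectionOnto y : V)‖ / ‖y + t • w‖)) 0 0 := by
    simpa [Function.comp_def] using (hd2 _).hasDerivAt.comp 0 hb
  have hA : HasDerivAt (fun t : ℝ => (⟪y + t • w, u⟫ : ℝ)) ⟪w, u⟫ 0 := by
    have hfun : (fun t : ℝ => (⟪y + t • w, u⟫ : ℝ)) = fun t : ℝ => ⟪y, u⟫ + t * ⟪w, u⟫ := by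
      funext t; simp [inner_add_left, real_inner_smul_left]
    rw [hfun]
    simpa using (((hasDerivAt_id (0 : ℝ)).mul_const (⟪w, u⟫ : ℝ)).const_add (⟪y, u⟫ : ℝ))
  have hC : HasDerivAt (fun t : ℝ => (⟪y + t • w, v⟫ : ℝ)) ⟪w, v⟫ 0 := by
    have hfun : (fun t : ℝ => (⟪y + t • w, v⟫ : ℝ)) = fun t : ℝ => ⟪y, v⟫ + t * ⟪w, v⟫ := by
      funext t; simp [inner_add_left, real_inner_smul_left]
    rw [hfun]
    simpa using (((hasDerivAt_id (0 : ℝ)).mul_const (⟪w, v⟫ : ℝ)).const_add (⟪y, v⟫ : ℝ))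
  have hA' : HasDerivAt (fun t : ℝ => (⟪u, y + t • w⟫ : ℝ)) ⟪u, w⟫ 0 := by
    have hfun : (fun t : ℝ => (⟪u, y + t • w⟫ : ℝ)) = fun t : ℝ => ⟪u, y⟫ + t * ⟪u, w⟫ := by
      funext t; simp [inner_add_right, real_inner_smul_right]
    rw [hfun]
    simpa using (((hasDerivAt_id (0 : ℝ)).mul_const (⟪u, w⟫ : ℝ)).const_add (⟪u, y⟫ : ℝ))
  have hC' : HasDerivAt (fun t : ℝ => (⟪v, y + t • w⟫ : ℝ)) ⟪v, w⟫ 0 := by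
    have hfun : (fun t : ℝ => (⟪v, y + t • w⟫ : ℝ)) = fun t : ℝ => ⟪v, y⟫ + t * ⟪v, w⟫ := by
      funext t; simp [inner_add_right, real_inner_smul_right]
    rw [hfun]
    simpa using (((hasDerivAt_id (0 : ℝ)).mul_const (⟪v, w⟫ : ℝ)).const_add (⟪v, y⟫ : ℝ))
  -- assembly
  have hdenA : (fun t : ℝ => ‖y + t • w‖ * ‖(m₂.orthogonalProjectionOnto y : V)‖) 0 ≠ 0 := by
    simp only [zero_smul, add_zero]
    exact mul_ne_zero hs hr
  have hdenB : (fun t : ℝ => ‖y + t • w‖ ^ 3) 0 ≠ 0 := by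
    simp only [zero_smul, add_zero]
    exact pow_ne_zero 3 hs
  have hdenC : (fun t : ℝ => ‖y + t • w‖) 0 ≠ 0 := by
    simp only [zero_smul, add_zero]; exact hs
  have T1 := (hp.pow 2).const_mul (⟪u, v⟫ : ℝ)
  have S1 := (hC.mul_const
      (⟪(m₂.orthogonalProjectionOnto y : V), (m₂.orthogonalProjectionOnto u : V)⟫ : ℝ)).div
      (hn.mul_const ‖(m₂.orthogonalProjectionOnto y : V)‖) hdenA
  have S2 := (hA.const_mul
      (⟪(m₂.orthogonalProjectionOnto y : V), (m₂.orthogonalProjectionOnto v : V)⟫ : ℝ)).div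
      (hn.mul_const ‖(m₂.orthogonalProjectionOnto y : V)‖) hdenA
  have S3 := ((hA.mul hC).mul_const ‖(m₂.orthogonalProjectionOnto y : V)‖).div (hn.pow 3) hdenB
  have S4 := (hn.const_mul
      (⟪(m₂.orthogonalProjectionOnto u : V), (m₂.orthogonalProjectionOnto v : V)⟫ : ℝ)).div_const
      ‖(m₂.orthogonalProjectionOnto y : V)‖
  have S5 := (hasDerivAt_const (0 : ℝ)
      ((⟪u, v⟫ : ℝ) * ‖(m₂.orthogonalProjectionOnto y : V)‖)).div hn hdenC
  have S6 := (hn.const_mul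
      ((⟪(m₂.orthogonalProjectionOnto u : V), (m₂.orthogonalProjectionOnto y : V)⟫ : ℝ) *
        (⟪(m₂.orthogonalProjectionOnto v : V), (m₂.orthogonalProjectionOnto y : V)⟫ : ℝ))).div_const
      (‖(m₂.orthogonalProjectionOnto y : V)‖ ^ 3)
  have T2 := (hp.mul hq).mul (((((S1.add S2).sub S3).add S4).sub S5).sub S6)
  have X1 := ((hasDerivAt_const (0 : ℝ)
      (⟪(m₂.orthogonalProjectionOnto u : V), (m₂.orthogonalProjectionOnto y : V)⟫ : ℝ)).div
      (hn.mul_const ‖(m₂.orthogonalProjectionOnto y : V)‖) hdenA).sub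
      ((hA'.mul_const ‖(m₂.orthogonalProjectionOnto y : V)‖).div (hn.pow 3) hdenB)
  have Y1 := ((hn.const_mul
      (⟪(m₂.orthogonalProjectionOnto v : V), (m₂.orthogonalProjectionOnto y : V)⟫ : ℝ)).div_const
      ‖(m₂.orthogonalProjectionOnto y : V)‖).sub
      ((hC'.mul_const ‖(m₂.orthogonalProjectionOnto y : V)‖).div hn hdenC)
  have T3 := (((hq.pow 2).add (hp.mul hq2)).mul X1).mul Y1
  have hbig := (T1.add T2).add T3
  have hkey := hbig.congr_of_eventuallyEq
    (f₁ := fun t : ℝ => tanXu m₂ φ (y + t • w) u v)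
    (Filter.Eventually.of_forall fun t => by
      simp only [tanXu, map_add, map_smul, hPw0, ZeroMemClass.coe_zero, smul_zero, add_zero,
        Pi.add_apply, Pi.sub_apply, Pi.mul_apply, Pi.div_apply, Pi.pow_apply])
  have hder := hkey.deriv
  have hPu0 : ((m₂.orthogonalProjectionOnto (B z u)) : V) = (0 : V) := by rw [hm2 z u]; rfl
  have hPv0 : ((m₂.orthogonalProjectionOnto (B z v)) : V) = (0 : V) := by rw [hm2 z v]; rfl
  have e1 : (⟪u, B z v⟫ : ℝ) = ⟪B z v, u⟫ := real_inner_comm _ _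
  have e2 : (⟪B z u, v⟫ : ℝ) = -⟪B z v, u⟫ := hskew z u v
  have e3 : (⟪y, B z u⟫ : ℝ) = -⟪w, u⟫ := by rw [real_inner_comm, hskew z u y, ← hwdef]
  have e4 : (⟪B z u, y⟫ : ℝ) = -⟪w, u⟫ := by rw [hskew z u y, ← hwdef]
  have e5 : (⟪y, B z v⟫ : ℝ) = -⟪w, v⟫ := by rw [real_inner_comm, hskew z v y, ← hwdef]
  have e6 : (⟪B z v, y⟫ : ℝ) = -⟪w, v⟫ := by rw [hskew z v y, ← hwdef]
  have e7 : (⟪u, w⟫ : ℝ) = ⟪w, u⟫ := real_inner_comm _ _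
  have e8 : (⟪v, w⟫ : ℝ) = ⟪w, v⟫ := real_inner_comm _ _
  have e9 : (⟪u, y⟫ : ℝ) = ⟪y, u⟫ := real_inner_comm _ _
  have e10 : (⟪v, y⟫ : ℝ) = ⟪y, v⟫ := real_inner_comm _ _
  have e11 : (⟪(m₂.orthogonalProjectionOnto u : V), (m₂.orthogonalProjectionOnto y : V)⟫ : ℝ)
      = ⟪(m₂.orthogonalProjectionOnto y : V), (m₂.orthogonalProjectionOnto u : V)⟫ := real_inner_comm _ _
  have e12 : (⟪(m₂.orthogonalProjectionOnto v : V), (m₂.orthogonalProjectionOnto y : V)⟫ : ℝ)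
      = ⟪(m₂.orthogonalProjectionOnto y : V), (m₂.orthogonalProjectionOnto v : V)⟫ := real_inner_comm _ _
  simp only [cartanXu]
  rw [hder]
  simp only [tanXu, hPu0, hPv0, inner_zero_left, inner_zero_right, zero_smul, add_zero,
    e2, e1, e3, e4, e5, e6, e7, e8, e9, e10, e11, e12, norm_zero,
    Pi.add_apply, Pi.sub_apply, Pi.mul_apply, Pi.div_apply, Pi.pow_apply]
  field_simp
  ring
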